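/- Suppose E[V − τ] < 0, so that M_∞ is P-a.s. finite. If X : Ω → [0,∞) is a measurable random variable satisfying X ∘ θ = φ(X(·), ·) P-a.s., then X ≤ M_∞ P-a.s. -/

import Mathlib

open MeasureTheory Filter

noncomputable section

variable {Ω : Type*}

/-- ψ(y, ω) = max( max( y + V ω, σ ω + D ω + V ω ) − τ ω, 0 ). -/
def psi (σ D V τ : Ω → ℝ) (y : ℝ) (ω : Ω) : ℝ :=
  max (max (y + V ω) (σ ω + D ω + V ω) - τ ω) 0

/-- φ(x, ω): the one-step workload map, defined by its four cases:
x + σ − τ if x + σ − τ > 0 and x ≤ D; x − τ if x − τ > 0 and x > D;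
max(x + σ + V − τ, 0) if x + σ − τ ≤ 0 and x ≤ D; 0 if x − τ ≤ 0 and x > D. -/
def phi (σ D V τ : Ω → ℝ) (x : ℝ) (ω : Ω) : ℝ :=
  if x ≤ D ω then
    if 0 < x + σ ω - τ ω then x + σ ω - τ ω else max (x + σ ω + V ω - τ ω) 0
  else
    if 0 < x - τ ω then x - τ ω else 0

/-- S_j(ω) = σ(θ^{-j}ω) + D(θ^{-j}ω) + Σ_{i=1}^{j} V(θ^{-i}ω) − Σ_{i=1}^{j} τ(θ^{-i}ω),
where `θi` denotes the inverse of `θ`. -/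
def Sj (θi : Ω → Ω) (σ D V τ : Ω → ℝ) (j : ℕ) (ω : Ω) : ℝ :=
  σ (θi^[j] ω) + D (θi^[j] ω)
    + ∑ i ∈ Finset.Icc 1 j, V (θi^[i] ω)
    - ∑ i ∈ Finset.Icc 1 j, τ (θi^[i] ω)

/-- M_∞ = max(0, sup_{j ≥ 1} S_j) ∈ [0,∞]. -/
def Minf (θi : Ω → Ω) (σ D V τ : Ω → ℝ) (ω : Ω) : EReal :=
  max 0 (⨆ j : ℕ, ((Sj θi σ D V τ (j + 1) ω : ℝ) : EReal))

/-- The workload sequence Z_0^W = W, Z_{n+1}^W(ω) = φ(Z_n^W(ω), θⁿω). -/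
def Zseq (θf : Ω → Ω) (σ D V τ : Ω → ℝ) (W : Ω → ℝ) : ℕ → Ω → ℝ
  | 0 => W
  | n + 1 => fun ω => phi σ D V τ (Zseq θf σ D V τ W n ω) (θf^[n] ω)

/-- The majorizing sequence Y_0^Y = Y, Y_{n+1}^Y(ω) = ψ(Y_n^Y(ω), θⁿω). -/
def Yseq (θf : Ω → Ω) (σ D V τ : Ω → ℝ) (Y : Ω → ℝ) : ℕ → Ω → ℝ
  | 0 => Y
  | n + 1 => fun ω => psi σ D V τ (Yseq θf σ D V τ Y n ω) (θf^[n] ω)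

/-!
Along the backward orbit `ωₖ = θ⁻ᵏ ω` the equation gives
`X ωₖ = φ (X ωₖ₊₁) ωₖ₊₁ ≤ ψ (X ωₖ₊₁) ωₖ₊₁`. Unrolling this Lindley-type recursion `n` steps
shows that either `X ω ≤ X ωₙ + ∑_{i=1}^n (V - τ) ωᵢ`, or `X ω` is bounded by `0` or by some
`S_j ω`, hence by `M_∞ ω`. By Poincaré recurrence `X ωₙ ≤ ⌈X ω⌉` for infinitely many `n`,
while by Hopf's maximal ergodic lemma the Birkhoff sums of `V - τ`, which has negative mean,
tend to `-∞`; so the first alternative fails for some `n`.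
-/

section MaximalErgodic

variable {α : Type*} (T : α → α) (g : α → ℝ)

def maxBirkhoffSum : ℕ → α → ℝ
  | 0 => fun _ => 0
  | n + 1 => fun x => max (maxBirkhoffSum n x) (birkhoffSum T g (n + 1) x)

lemma maxBirkhoffSum_nonneg (n : ℕ) (x : α) : 0 ≤ maxBirkhoffSum T g n x := by
  induction n with
  | zero => exact le_rfl
  | succ n ih => exact ih.trans (le_max_left _ _)

lemma maxBirkhoffSum_le_succ (n : ℕ) (x : α) :
    maxBirkhoffSum T g n x ≤ maxBirkhoffSum T g (n + 1) x :=
  le_max_left _ _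

lemma birkhoffSum_le_maxBirkhoffSum (n : ℕ) (x : α) :
    birkhoffSum T g n x ≤ maxBirkhoffSum T g n x := by
  cases n with
  | zero => simp [maxBirkhoffSum]
  | succ n => exact le_max_right _ _

lemma maxBirkhoffSum_succ (n : ℕ) (x : α) :
    maxBirkhoffSum T g (n + 1) x = max 0 (g x + maxBirkhoffSum T g n (T x)) := by
  induction n generalizing x with
  | zero => simp [maxBirkhoffSum, birkhoffSum_one]
  | succ n ih =>
    change max (maxBirkhoffSum T g (n + 1) x) (birkhoffSum T g (n + 2) x) = _
    rw [ih, birkhoffSum_succ', max_assoc, max_add_add_left]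
    rfl

lemma maxBirkhoffSum_le_add_comp {n : ℕ} {x : α} (h : 0 < maxBirkhoffSum T g n x) :
    maxBirkhoffSum T g n x ≤ g x + maxBirkhoffSum T g n (T x) := by
  cases n with
  | zero => exact absurd h (lt_irrefl 0)
  | succ n =>
    rw [maxBirkhoffSum_succ] at h ⊢
    rw [max_eq_right (lt_max_iff.1 h |>.resolve_left (lt_irrefl 0)).le]
    exact add_le_add_right (maxBirkhoffSum_le_succ T g n (T x)) _

variable {T g} [MeasurableSpace α]

lemma measurable_maxBirkhoffSum (hT : Measurable T) (hg : Measurable g) (n : ℕ) :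
    Measurable (maxBirkhoffSum T g n) := by
  induction n with
  | zero => exact measurable_const
  | succ n ih =>
    exact ih.max (Finset.measurable_sum _ fun k _ => hg.comp (hT.iterate k))

variable {μ : Measure α}

lemma integrable_maxBirkhoffSum (hT : MeasurePreserving T μ μ) (hg : Integrable g μ) (n : ℕ) :
    Integrable (maxBirkhoffSum T g n) μ := by
  induction n with
  | zero => exact integrable_zero _ _ _
  | succ n ih =>
    refine ih.sup (integrable_finsetSum _ fun k _ => ?_)
    exact (hT.iterate k).integrable_comp_of_integrable hg

/-- Hopf's maximal ergodic lemma, by Garsia's argument. -/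
theorem MeasureTheory.MeasurePreserving.setIntegral_maxBirkhoffSum_pos_nonneg
    (hT : MeasurePreserving T μ μ) (hgm : Measurable g) (hgi : Integrable g μ) (n : ℕ) :
    0 ≤ ∫ x in {x | 0 < maxBirkhoffSum T g n x}, g x ∂μ := by
  set M := maxBirkhoffSum T g n
  have hMm : Measurable M := measurable_maxBirkhoffSum hT.measurable hgm n
  have hMi : Integrable M μ := integrable_maxBirkhoffSum hT hgi n
  have hMTi : Integrable (M ∘ T) μ := hT.integrable_comp_of_integrable hMi
  have hle : M - M ∘ T ≤ {x | 0 < M x}.indicator g := by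
    intro x
    by_cases hx : 0 < M x
    · simpa [Set.indicator_of_mem (show x ∈ {x | 0 < M x} from hx), sub_le_iff_le_add']
        using maxBirkhoffSum_le_add_comp T g hx
    · have hMx : M x = 0 := le_antisymm (not_lt.1 hx) (maxBirkhoffSum_nonneg T g n x)
      simp [hMx, maxBirkhoffSum_nonneg T g n (T x), M]
  have hzero : ∫ x, (M - M ∘ T) x ∂μ = 0 := by
    rw [integral_sub' hMi hMTi, Function.comp_def,
      ← integral_map hT.measurable.aemeasurable (hT.map_eq ▸ hMm.aestronglyMeasurable),
      hT.map_eq, sub_self]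
  rw [← integral_indicator (measurableSet_lt measurable_const hMm)]
  refine hzero.symm.le.trans ?_
  exact integral_mono (hMi.sub hMTi) (hgi.indicator (measurableSet_lt measurable_const hMm)) hle

theorem Ergodic.ae_bddAbove_birkhoffSum (hT : Ergodic T μ) (hgm : Measurable g)
    (hgi : Integrable g μ) (hneg : ∫ x, g x ∂μ < 0) :
    ∀ᵐ x ∂μ, BddAbove (Set.range fun n => birkhoffSum T g n x) := by
  set F := {x | BddAbove (Set.range fun n => birkhoffSum T g n x)}
  have hFm : MeasurableSet F := measurableSet_bddAbove_range fun n =>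
    Finset.measurable_sum _ fun k _ => hgm.comp (hT.measurable.iterate k)
  have hFinv : T ⁻¹' F = F := by
    ext x
    simp only [F, Set.mem_preimage, Set.mem_ofPred_eq, bddAbove_def, Set.forall_mem_range]
    constructor
    · rintro ⟨C, hC⟩
      refine ⟨max 0 (g x + C), fun n => ?_⟩
      cases n with
      | zero => simp [birkhoffSum_zero]
      | succ n => exact le_max_of_le_right (by linarith [hC n, birkhoffSum_succ' T g n x])
    · rintro ⟨C, hC⟩
      exact ⟨C - g x, fun n => by linarith [hC (n + 1), birkhoffSum_succ' T g n x]⟩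
  rcases hT.ae_empty_or_univ hFm hFinv with hF | hF
  · exfalso
    set E : ℕ → Set α := fun n => {x | 0 < maxBirkhoffSum T g n x}
    have hEm : ∀ n, MeasurableSet (E n) := fun n =>
      measurableSet_lt measurable_const (measurable_maxBirkhoffSum hT.measurable hgm n)
    have hEmono : Monotone E := monotone_nat_of_le_succ fun n x hx =>
      hx.trans_le (maxBirkhoffSum_le_succ T g n x)
    have hcover : Fᶜ ⊆ ⋃ n, E n := by
      intro x hx
      obtain ⟨_, ⟨n, rfl⟩, hn⟩ := not_bddAbove_iff.1 hx 0
      exact Set.mem_iUnion.2 ⟨n, hn.trans_le (birkhoffSum_le_maxBirkhoffSum T g n x)⟩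
    have hfull : ⋃ n, E n =ᵐ[μ] Set.univ :=
      ae_eq_univ.2 (measure_mono_null (Set.compl_subset_comm.1 hcover) (ae_eq_empty.1 hF))
    have hlim := tendsto_setIntegral_of_monotone hEm hEmono hgi.integrableOn
    rw [setIntegral_congr_set hfull, setIntegral_univ] at hlim
    exact hneg.not_ge (ge_of_tendsto hlim (Eventually.of_forall fun n =>
      hT.toMeasurePreserving.setIntegral_maxBirkhoffSum_pos_nonneg hgm hgi n))
  · exact eventuallyEq_univ.1 hF

theorem Ergodic.ae_tendsto_birkhoffSum_atBot [IsProbabilityMeasure μ] (hT : Ergodic T μ)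
    (hgm : Measurable g) (hgi : Integrable g μ) (hneg : ∫ x, g x ∂μ < 0) :
    ∀ᵐ x ∂μ, Tendsto (fun n => birkhoffSum T g n x) atTop atBot := by
  obtain ⟨c, hc, hcg⟩ : ∃ c : ℝ, 0 < c ∧ ∫ x, g x ∂μ + c < 0 :=
    ⟨-(∫ x, g x ∂μ) / 2, by linarith, by linarith⟩
  have hshift : ∫ x, (g x + c) ∂μ < 0 := by
    rw [integral_add hgi (integrable_const c), integral_const, probReal_univ, one_smul]
    exact hcg
  filter_upwards [hT.ae_bddAbove_birkhoffSum (hgm.add_const c) (hgi.add (integrable_const c))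
    hshift] with x ⟨C, hC⟩
  have hbound (n : ℕ) : birkhoffSum T g n x ≤ C - n * c := by
    have hn : birkhoffSum T (fun x => g x + c) n x = birkhoffSum T g n x + n * c := by
      simp [birkhoffSum, Finset.sum_add_distrib]
    linarith [hC ⟨n, rfl⟩]
  refine tendsto_atBot_mono hbound ?_
  simpa [sub_eq_add_neg] using tendsto_atBot_add_const_left atTop C
    (tendsto_neg_atTop_atBot.comp (tendsto_natCast_atTop_atTop.atTop_mul_const hc))

end MaximalErgodic

section Workload

variable (T : Ω → Ω) (σ D V τ : Ω → ℝ)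

lemma phi_le_psi {x : ℝ} {ω : Ω} (hV : 0 ≤ V ω) : phi σ D V τ x ω ≤ psi σ D V τ x ω := by
  have hmono (y : ℝ) (hy : y ≤ max (x + V ω) (σ ω + D ω + V ω)) :
      max (y - τ ω) 0 ≤ psi σ D V τ x ω :=
    max_le_max_right 0 (sub_le_sub_right hy _)
  unfold phi
  split_ifs with hD hpos hpos
  · exact (le_max_left _ _).trans (hmono _ (le_max_of_le_right (by linarith)))
  · exact hmono _ (le_max_of_le_right (by linarith))
  · exact (le_max_left _ _).trans (hmono _ (le_max_of_le_left (by linarith)))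
  · exact le_max_right _ _

lemma Sj_eq_add_birkhoffSum (j : ℕ) (ω : Ω) :
    Sj T σ D V τ j ω =
      σ (T^[j] ω) + D (T^[j] ω) + birkhoffSum T (fun η => V η - τ η) j (T ω) := by
  rw [Sj, add_sub_assoc, ← Finset.sum_sub_distrib, ← Finset.Ico_add_one_right_eq_Icc,
    Finset.sum_Ico_eq_sum_range]
  simp [birkhoffSum, add_comm 1, Function.iterate_succ_apply]

lemma coe_Sj_le_Minf {j : ℕ} (hj : 1 ≤ j) (ω : Ω) :
    (Sj T σ D V τ j ω : EReal) ≤ Minf T σ D V τ ω := by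
  obtain ⟨j, rfl⟩ := Nat.exists_eq_add_of_le' hj
  exact (le_iSup (fun j : ℕ => ((Sj T σ D V τ (j + 1) ω : ℝ) : EReal)) j).trans
    (le_max_right _ _)

variable {σ D}

lemma coe_birkhoffSum_le_Minf (hσ0 : ∀ ω, 0 ≤ σ ω) (hD0 : ∀ ω, 0 ≤ D ω) (n : ℕ) (ω : Ω) :
    ((birkhoffSum T (fun η => V η - τ η) n (T ω) : ℝ) : EReal) ≤ Minf T σ D V τ ω := by
  rcases n.eq_zero_or_pos with rfl | hn
  · simp [Minf]
  · refine le_trans ?_ (coe_Sj_le_Minf T σ D V τ hn ω)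
    rw [EReal.coe_le_coe_iff, Sj_eq_add_birkhoffSum]
    linarith [hσ0 (T^[n] ω), hD0 (T^[n] ω)]

lemma le_add_birkhoffSum_or_le_Minf (hσ0 : ∀ ω, 0 ≤ σ ω) (hD0 : ∀ ω, 0 ≤ D ω) {x : Ω → ℝ} {ω : Ω}
    (hstep : ∀ k, x (T^[k] ω) ≤ psi σ D V τ (x (T^[k + 1] ω)) (T^[k + 1] ω)) (n : ℕ) :
    x ω ≤ x (T^[n] ω) + birkhoffSum T (fun η => V η - τ η) n (T ω) ∨
      (x ω : EReal) ≤ Minf T σ D V τ ω := by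
  induction n with
  | zero => simp [birkhoffSum_zero]
  | succ n ih =>
    refine ih.elim (fun h => ?_) Or.inr
    have hA : birkhoffSum T (fun η => V η - τ η) (n + 1) (T ω) =
        birkhoffSum T (fun η => V η - τ η) n (T ω) + (V (T^[n + 1] ω) - τ (T^[n + 1] ω)) := by
      rw [birkhoffSum_succ, ← Function.iterate_succ_apply]
    have hS := Sj_eq_add_birkhoffSum T σ D V τ (n + 1) ω
    have hk := hstep n
    rw [psi, ← max_sub_sub_right] at hk
    rcases le_max_iff.1 hk with hk | hk
    · rcases le_max_iff.1 hk with hk | hk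
      · exact .inl (by linarith)
      · exact .inr <| (EReal.coe_le_coe_iff.2 (by linarith)).trans
          (coe_Sj_le_Minf T σ D V τ n.succ_pos ω)
    · exact .inr <| (EReal.coe_le_coe_iff.2 (by linarith)).trans
        (coe_birkhoffSum_le_Minf T V τ hσ0 hD0 n ω)

end Workload

theorem solution_le_Minf_general
    [MeasurableSpace Ω] (P : Measure Ω) [IsProbabilityMeasure P]
    (θ : Ω ≃ᵐ Ω) (herg : Ergodic (⇑θ) P)
    (σ D V τ : Ω → ℝ)
    (hVm : Measurable V) (hτm : Measurable τ)
    (hσ0 : ∀ ω, 0 ≤ σ ω) (hD0 : ∀ ω, 0 ≤ D ω) (hV0 : ∀ ω, 0 ≤ V ω)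
    (hVi : Integrable V P) (hτi : Integrable τ P)
    (hEV : ∫ ω, (V ω - τ ω) ∂P < 0)
    (X : Ω → ℝ) (hXm : Measurable X) (hX0 : ∀ ω, 0 ≤ X ω)
    (hXsol : ∀ᵐ ω ∂P, X (θ ω) = phi σ D V τ (X ω) ω) :
    ∀ᵐ ω ∂P, ((X ω : ℝ) : EReal) ≤ Minf (⇑θ.symm) σ D V τ ω := by
  have hT : Ergodic θ.symm P := herg.symm
  have hstep : ∀ᵐ ω ∂P, ∀ k, X (θ.symm^[k] ω) ≤
      psi σ D V τ (X (θ.symm^[k + 1] ω)) (θ.symm^[k + 1] ω) := by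
    refine ae_all_iff.2 fun k => ?_
    filter_upwards [(hT.toMeasurePreserving.iterate (k + 1)).quasiMeasurePreserving.ae hXsol]
      with ω hω
    have hθ : θ (θ.symm^[k + 1] ω) = θ.symm^[k] ω := by
      rw [Function.iterate_succ_apply', θ.apply_symm_apply]
    rw [hθ] at hω
    exact hω.le.trans (phi_le_psi σ D V τ (hV0 _))
  have hrecur : ∀ᵐ ω ∂P, ∀ K : ℕ, X ω ≤ K → ∃ᶠ n in atTop, X (θ.symm^[n] ω) ≤ K :=
    ae_all_iff.2 fun K => hT.toMeasurePreserving.conservative.ae_mem_imp_frequently_image_mem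
      (measurableSet_le hXm measurable_const).nullMeasurableSet
  have hdrift : ∀ᵐ ω ∂P,
      Tendsto (fun n => birkhoffSum θ.symm (fun η => V η - τ η) n (θ.symm ω)) atTop atBot :=
    hT.toMeasurePreserving.quasiMeasurePreserving.ae
      (hT.ae_tendsto_birkhoffSum_atBot (hVm.sub hτm) (hVi.sub hτi) hEV)
  filter_upwards [hstep, hrecur, hdrift] with ω hstep hrecur hdrift
  obtain ⟨n, hXn, hdrift_n⟩ := ((hrecur _ (Nat.le_ceil (X ω))).and_eventually
    (hdrift.eventually_lt_atBot (-⌈X ω⌉₊))).exists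
  refine (le_add_birkhoffSum_or_le_Minf θ.symm V τ hσ0 hD0 hstep n).resolve_left fun h => ?_
  linarith [hX0 ω]

/-- if E[V − τ] < 0 and X solves X ∘ θ = φ(X, ·) P-a.s., then
X ≤ M_∞ P-a.s. -/
theorem solution_le_Minf
    [MeasurableSpace Ω] (P : Measure Ω) [IsProbabilityMeasure P]
    (θ : Ω ≃ᵐ Ω) (herg : Ergodic (⇑θ) P)
    (σ D V τ : Ω → ℝ)
    (hσm : Measurable σ) (hDm : Measurable D) (hVm : Measurable V) (hτm : Measurable τ)
    (hσ0 : ∀ ω, 0 ≤ σ ω) (hD0 : ∀ ω, 0 ≤ D ω) (hV0 : ∀ ω, 0 ≤ V ω) (hτ0 : ∀ ω, 0 ≤ τ ω)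
    (hσi : Integrable σ P) (hDi : Integrable D P) (hVi : Integrable V P) (hτi : Integrable τ P)
    (hτpos : ∀ᵐ ω ∂P, 0 < τ ω)
    (hEV : ∫ ω, (V ω - τ ω) ∂P < 0)
    (X : Ω → ℝ) (hXm : Measurable X) (hX0 : ∀ ω, 0 ≤ X ω)
    (hXsol : ∀ᵐ ω ∂P, X (θ ω) = phi σ D V τ (X ω) ω) :
    ∀ᵐ ω ∂P, ((X ω : ℝ) : EReal) ≤ Minf (⇑θ.symm) σ D V τ ω :=
  solution_le_Minf_general P θ herg σ D V τ hVm hτm hσ0 hD0 hV0 hVi hτi hEV X hXm hX0 hXsol
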